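/- arXiv:1609.09530 — 9 statements merged into one kernel-verified Lean document; each statement's English description precedes it below -/
import Mathlib

section
/- Let y ∈ ℝ^N, λ > 0, α ≥ 0, and define F(x) = ‖x‖₁ - α‖x‖₂ + (1/(2λ))‖x - y‖₂². If ‖y‖_∞ > λ, then the vector x* = z(‖z‖₂ + αλ)/‖z‖₂, where z = S₁(y, λ) is the componentwise soft-shrinkage of y with threshold λ (S₁(y,λ)_i = sign(y_i)·max(|y_i|-λ, 0)), is a global minimizer of F. -/
open Finset Filter Set
open scoped RealInnerProductSpace

noncomputable def norm1 {N : ℕ} (x : EuclideanSpace ℝ (Fin N)) : ℝ := ∑ i, |x i|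

noncomputable def normInf {N : ℕ} (x : EuclideanSpace ℝ (Fin N)) : ℝ := ⨆ i, |x i|

noncomputable def Fobj {N : ℕ} (a lam : ℝ) (y x : EuclideanSpace ℝ (Fin N)) : ℝ :=
  norm1 x - a * ‖x‖ + 1 / (2 * lam) * ‖x - y‖ ^ 2

/-- Soft-thresholding operator. -/
noncomputable def soft {N : ℕ} (lam : ℝ) (y : EuclideanSpace ℝ (Fin N)) :
    EuclideanSpace ℝ (Fin N) := WithLp.toLp 2 (fun i => Real.sign (y i) * max (|y i| - lam) 0)

/-! Write `z = soft lam y`. Coordinatewise `xᵢyᵢ - λ|xᵢ| ≤ |xᵢ||zᵢ|`, so by Cauchy–Schwarz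
`⟪x, y⟫ - λ‖x‖₁ ≤ ‖x‖‖z‖`, with equality along the ray through `z`. Hence
`2λ F(x) ≥ ‖x‖² - 2(‖z‖ + αλ)‖x‖ + ‖y‖² ≥ ‖y‖² - (‖z‖ + αλ)²`, and the candidate, the point of
that ray of norm `‖z‖ + αλ`, attains both bounds. -/

lemma Real.sign_mul_self_eq_abs (r : ℝ) : Real.sign r * r = |r| := by
  rcases lt_trichotomy r 0 with h | rfl | h
  · rw [Real.sign_of_neg h, abs_of_neg h, neg_one_mul]
  · simp
  · rw [Real.sign_of_pos h, abs_of_pos h, one_mul]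

section SoftThresholding

variable {N : ℕ} {lam : ℝ}

lemma soft_apply (y : EuclideanSpace ℝ (Fin N)) (i : Fin N) :
    soft lam y i = Real.sign (y i) * max (|y i| - lam) 0 := rfl

lemma abs_soft_apply (hlam : 0 ≤ lam) (y : EuclideanSpace ℝ (Fin N)) (i : Fin N) :
    |soft lam y i| = max (|y i| - lam) 0 := by
  rw [soft_apply]
  rcases lt_trichotomy (y i) 0 with h | h | h
  · rw [Real.sign_of_neg h, abs_mul, abs_neg, abs_one, one_mul, abs_of_nonneg (le_max_right _ _)]
  · simp [h, hlam]
  · rw [Real.sign_of_pos h, abs_mul, abs_one, one_mul, abs_of_nonneg (le_max_right _ _)]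

lemma soft_apply_mul_self (hlam : 0 ≤ lam) (y : EuclideanSpace ℝ (Fin N)) (i : Fin N) :
    soft lam y i * y i = soft lam y i ^ 2 + lam * |soft lam y i| := by
  have hmul : soft lam y i * y i = max (|y i| - lam) 0 * |y i| := by
    rw [soft_apply, ← Real.sign_mul_self_eq_abs]; ring
  rw [hmul, ← sq_abs, abs_soft_apply hlam]
  rcases le_total (|y i| - lam) 0 with h | h
  · simp [max_eq_right h]
  · rw [max_eq_left h]; ring

lemma mul_sub_mul_abs_le_abs_mul_abs_soft (hlam : 0 ≤ lam) (x : ℝ)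
    (y : EuclideanSpace ℝ (Fin N)) (i : Fin N) :
    x * y i - lam * |x| ≤ |x| * |soft lam y i| := by
  have hxy : x * y i ≤ |x| * |y i| := (le_abs_self _).trans (abs_mul _ _).le
  have hy : |y i| - lam ≤ |soft lam y i| := abs_soft_apply hlam y i ▸ le_max_left _ _
  nlinarith [abs_nonneg x]

lemma soft_ne_zero (hlam : 0 ≤ lam) {y : EuclideanSpace ℝ (Fin N)} (hy : lam < normInf y) :
    soft lam y ≠ 0 := by
  obtain ⟨i, hi⟩ : ∃ i, lam < |y i| := by
    by_contra! h
    exact hy.not_ge (Real.iSup_le h hlam)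
  intro h0
  have hzi := abs_soft_apply hlam y i
  rw [h0, max_eq_left (by linarith)] at hzi
  simp at hzi
  linarith

end SoftThresholding

section Objective

variable {N : ℕ}

lemma inner_eq_sum (x y : EuclideanSpace ℝ (Fin N)) : ⟪x, y⟫ = ∑ i, x i * y i := by
  simp [PiLp.inner_apply, mul_comm]

lemma norm_sq_eq_sum (x : EuclideanSpace ℝ (Fin N)) : ‖x‖ ^ 2 = ∑ i, x i ^ 2 := by
  simp [EuclideanSpace.norm_sq_eq]

lemma norm1_smul (c : ℝ) (x : EuclideanSpace ℝ (Fin N)) : norm1 (c • x) = |c| * norm1 x := by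
  simp [norm1, Finset.mul_sum, abs_mul]

lemma two_mul_mul_Fobj {a lam : ℝ} (hlam : lam ≠ 0) (y x : EuclideanSpace ℝ (Fin N)) :
    2 * lam * Fobj a lam y x =
      ‖x‖ ^ 2 - 2 * (⟪x, y⟫ - lam * norm1 x) - 2 * a * lam * ‖x‖ + ‖y‖ ^ 2 := by
  rw [Fobj, norm_sub_sq_real]
  field_simp
  ring

end Objective

section Minimizer

variable {N : ℕ} {lam : ℝ}

lemma inner_soft_sub_mul_norm1 (hlam : 0 ≤ lam) (y : EuclideanSpace ℝ (Fin N)) :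
    ⟪soft lam y, y⟫ - lam * norm1 (soft lam y) = ‖soft lam y‖ ^ 2 := by
  rw [inner_eq_sum, norm_sq_eq_sum, norm1, Finset.mul_sum, ← Finset.sum_sub_distrib]
  exact Finset.sum_congr rfl fun i _ => by rw [soft_apply_mul_self hlam]; ring

lemma inner_sub_mul_norm1_le (hlam : 0 ≤ lam) (x y : EuclideanSpace ℝ (Fin N)) :
    ⟪x, y⟫ - lam * norm1 x ≤ ‖x‖ * ‖soft lam y‖ := by
  calc ⟪x, y⟫ - lam * norm1 x = ∑ i, (x i * y i - lam * |x i|) := by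
        rw [inner_eq_sum, norm1, Finset.mul_sum, Finset.sum_sub_distrib]
    _ ≤ ∑ i, |x i| * |soft lam y i| :=
        Finset.sum_le_sum fun i _ => mul_sub_mul_abs_le_abs_mul_abs_soft hlam (x i) y i
    _ ≤ ‖x‖ * ‖soft lam y‖ := by
        simpa [EuclideanSpace.norm_eq] using Real.sum_mul_le_sqrt_mul_sqrt Finset.univ
          (fun i => |x i|) (fun i => |soft lam y i|)

lemma sq_sub_sq_le_two_mul_mul_Fobj (a : ℝ) (hlam : 0 < lam) (x y : EuclideanSpace ℝ (Fin N)) :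
    ‖y‖ ^ 2 - (‖soft lam y‖ + a * lam) ^ 2 ≤ 2 * lam * Fobj a lam y x := by
  rw [two_mul_mul_Fobj hlam.ne']
  nlinarith [inner_sub_mul_norm1_le hlam.le x y, sq_nonneg (‖x‖ - (‖soft lam y‖ + a * lam))]

lemma two_mul_mul_Fobj_smul_soft {a : ℝ} (hlam : 0 < lam) (ha : 0 ≤ a)
    {y : EuclideanSpace ℝ (Fin N)} (hy : lam < normInf y) :
    2 * lam * Fobj a lam y (((‖soft lam y‖ + a * lam) / ‖soft lam y‖) • soft lam y) =
      ‖y‖ ^ 2 - (‖soft lam y‖ + a * lam) ^ 2 := by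
  set s := ‖soft lam y‖
  have hs : 0 < s := norm_pos_iff.mpr (soft_ne_zero hlam.le hy)
  have hc : 0 ≤ (s + a * lam) / s := by positivity
  have hinner := inner_soft_sub_mul_norm1 hlam.le y
  rw [two_mul_mul_Fobj hlam.ne', norm1_smul, norm_smul, real_inner_smul_left, Real.norm_eq_abs,
    abs_of_nonneg hc]
  field_simp
  linear_combination (-2 * s * (s + a * lam)) * hinner

end Minimizer

theorem stmt0 {N : ℕ} (a lam : ℝ) (hlam : 0 < lam) (ha : 0 ≤ a)
    (y : EuclideanSpace ℝ (Fin N)) (hy : lam < normInf y) :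
    IsMinOn (Fobj a lam y) Set.univ
      (((‖soft lam y‖ + a * lam) / ‖soft lam y‖) • soft lam y) := by
  refine fun x _ => le_of_mul_le_mul_left ?_ (by positivity : 0 < 2 * lam)
  rw [two_mul_mul_Fobj_smul_soft hlam ha hy]
  exact sq_sub_sq_le_two_mul_mul_Fobj a hlam x y
end

section
/- Let y ∈ ℝ^N, λ > 0, 0 ≤ α, and define F(x) = ‖x‖₁ - α‖x‖₂ + (1/(2λ))‖x - y‖₂². If ‖y‖_∞ ≤ (1-α)λ (in particular α ≤ 1), then x* = 0 is a global minimizer of F. -/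
open Finset Filter Set
open scoped RealInnerProductSpace

lemma norm_le_norm1 {N : ℕ} (x : EuclideanSpace ℝ (Fin N)) : ‖x‖ ≤ norm1 x := by
  have h1 : 0 ≤ norm1 x := Finset.sum_nonneg fun i _ => abs_nonneg _
  have hsq : ‖x‖ ^ 2 ≤ (norm1 x) ^ 2 := by
    rw [EuclideanSpace.norm_eq, Real.sq_sqrt (Finset.sum_nonneg fun i _ => sq_nonneg _)]
    unfold norm1
    calc ∑ i, ‖x i‖ ^ 2 = ∑ i, |x i| * |x i| := by
          simp [sq, Real.norm_eq_abs]
      _ ≤ (∑ i, |x i|) * (∑ i, |x i|) := by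
          rw [Finset.sum_mul]
          apply Finset.sum_le_sum fun i _ => ?_
          exact mul_le_mul_of_nonneg_left
            (Finset.single_le_sum (fun j _ => abs_nonneg (x j)) (Finset.mem_univ i))
            (abs_nonneg _)
      _ = (∑ i, |x i|) ^ 2 := (sq _).symm
  nlinarith [norm_nonneg x]

lemma inner_le_norm1_mul {N : ℕ} (M : ℝ) (x y : EuclideanSpace ℝ (Fin N))
    (hM : normInf y ≤ M) : ⟪x, y⟫ ≤ norm1 x * M := by
  have hyi : ∀ i, |y i| ≤ M := by
    intro i
    refine le_trans ?_ hM
    unfold normInf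
    exact le_ciSup (Set.Finite.bddAbove (Set.finite_range (fun j => |y j|))) i
  have : ⟪x, y⟫ = ∑ i, x i * y i := by
    simp [PiLp.inner_apply, RCLike.inner_apply, mul_comm]
  rw [this, norm1, Finset.sum_mul]
  apply Finset.sum_le_sum fun i _ => ?_
  calc x i * y i ≤ |x i * y i| := le_abs_self _
    _ = |x i| * |y i| := abs_mul _ _
    _ ≤ |x i| * M := mul_le_mul_of_nonneg_left (hyi i) (abs_nonneg _)

theorem stmt1 {N : ℕ} (a lam : ℝ) (hlam : 0 < lam) (ha : 0 ≤ a)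
    (y : EuclideanSpace ℝ (Fin N)) (hy : normInf y ≤ (1 - a) * lam) :
    IsMinOn (Fobj a lam y) Set.univ 0 := by
  rw [isMinOn_iff]
  intro x _
  have h1 : ‖x‖ ≤ norm1 x := norm_le_norm1 x
  have h2 : ⟪x, y⟫ ≤ norm1 x * ((1 - a) * lam) := inner_le_norm1_mul _ x y hy
  have hxy : ‖x - y‖ ^ 2 = ‖x‖ ^ 2 - 2 * ⟪x, y⟫ + ‖y‖ ^ 2 := norm_sub_sq_real x y
  have h0 : norm1 (0 : EuclideanSpace ℝ (Fin N)) = 0 := by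
    simp [norm1]
  unfold Fobj
  rw [h0, hxy]
  simp only [norm_zero, zero_sub, norm_neg, mul_zero, sub_zero, zero_add]
  have hc : (0:ℝ) < 1 / (2 * lam) := by positivity
  have key : 1 / (2 * lam) * (2 * lam) = 1 := by
    field_simp
  nlinarith [norm_nonneg x, sq_nonneg ‖x‖, mul_le_mul_of_nonneg_left h2 hc.le,
    mul_le_mul_of_nonneg_left h1 ha, sq_nonneg (norm1 x)]
end

section
/- Let y ∈ ℝ^N, λ > 0, α ≥ 0, with ‖y‖_∞ = λ. Then x* is a global minimizer of F(x) = ‖x‖₁ - α‖x‖₂ + (1/(2λ))‖x - y‖₂² if and only if x*_i = 0 for all i with |y_i| < λ, ‖x*‖₂ = αλ, and x*_i y_i ≥ 0 for all i. -/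
open Finset Filter Set
open scoped RealInnerProductSpace

theorem stmt3 {N : ℕ} (a lam : ℝ) (hlam : 0 < lam) (ha : 0 ≤ a)
    (y xs : EuclideanSpace ℝ (Fin N)) (hy : normInf y = lam) :
    IsMinOn (Fobj a lam y) Set.univ xs ↔
      (∀ i, |y i| < lam → xs i = 0) ∧ ‖xs‖ = a * lam ∧ (∀ i, 0 ≤ xs i * y i) := by
  have hN : Nonempty (Fin N) := by
    by_contra h
    rw [not_nonempty_iff] at h
    have h0 : normInf y = 0 := by simp [normInf, ciSup_of_empty, Real.sSup_empty]
    rw [hy] at h0; linarith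
  have hyb : ∀ i, |y i| ≤ lam := by
    intro i
    rw [← hy]
    show |y i| ≤ ⨆ i, |y i|
    exact le_ciSup (f := fun i => |y i|) (Set.Finite.bddAbove (Set.finite_range _)) i
  obtain ⟨j, hj⟩ := Finite.exists_max (fun i => |y i|)
  have h' : normInf y ≤ |y j| := ciSup_le hj
  have hjl : |y j| = lam := le_antisymm (hyb j) (hy ▸ h')
  set C : ℝ := ‖y‖^2 / (2*lam) - a^2*lam/2 with hC
  -- key identity
  have key : ∀ x : EuclideanSpace ℝ (Fin N),
      Fobj a lam y x = (∑ i, (|x i| - x i * y i / lam)) + (‖x‖ - a*lam)^2 / (2*lam) + C := by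
    intro x
    have h1 : ‖x - y‖^2 = ‖x‖^2 - 2 * ⟪x, y⟫ + ‖y‖^2 := norm_sub_sq_real x y
    have h2 : ⟪x, y⟫ = ∑ i, x i * y i := by
      simp [PiLp.inner_apply, RCLike.inner_apply, mul_comm]
    simp only [Fobj, norm1, h1, h2, Finset.sum_sub_distrib, ← Finset.sum_div, hC]
    field_simp
    ring
  have hterm : ∀ (x : EuclideanSpace ℝ (Fin N)) i, 0 ≤ |x i| - x i * y i / lam := by
    intro x i
    rw [sub_nonneg, div_le_iff₀ hlam]
    calc x i * y i ≤ |x i * y i| := le_abs_self _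
      _ = |x i| * |y i| := abs_mul _ _
      _ ≤ |x i| * lam := mul_le_mul_of_nonneg_left (hyb i) (abs_nonneg _)
  -- value at a point satisfying the conditions
  have hval : ∀ x : EuclideanSpace ℝ (Fin N),
      (∀ i, |y i| < lam → x i = 0) → ‖x‖ = a * lam → (∀ i, 0 ≤ x i * y i) →
      Fobj a lam y x = C := by
    intro x h1 h2 h3
    rw [key x, h2, sub_self]
    have hS : (∑ i, (|x i| - x i * y i / lam)) = 0 := by
      apply Finset.sum_eq_zero
      intro i _
      rcases lt_or_eq_of_le (hyb i) with hlt | heq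
      · rw [h1 i hlt]; simp
      · have : x i * y i = |x i| * lam := by
          rw [← abs_of_nonneg (h3 i), abs_mul, heq]
        rw [this, mul_div_assoc, div_self hlam.ne', mul_one, sub_self]
    rw [hS]
    ring
  -- lower bound
  have hlow : ∀ x : EuclideanSpace ℝ (Fin N), C ≤ Fobj a lam y x := by
    intro x
    rw [key x]
    have h1 : 0 ≤ ∑ i, (|x i| - x i * y i / lam) :=
      Finset.sum_nonneg fun i _ => hterm x i
    have h2 : 0 ≤ (‖x‖ - a*lam)^2 / (2*lam) := by positivity
    linarith
  constructor
  · intro hmin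
    -- witness
    set x₀ : EuclideanSpace ℝ (Fin N) := a • EuclideanSpace.single j (y j) with hx₀
    have hx₀i : ∀ i, x₀ i = if i = j then a * y j else 0 := by
      intro i
      simp [hx₀, EuclideanSpace.single_apply, mul_ite]
    have hv0 : Fobj a lam y x₀ = C := by
      apply hval
      · intro i hi
        rw [hx₀i i]
        split
        · next h => rw [h] at hi; rw [hjl] at hi; linarith
        · rfl
      · rw [hx₀, norm_smul, EuclideanSpace.norm_single, Real.norm_eq_abs,
          Real.norm_eq_abs, abs_of_nonneg ha, hjl]
      · intro i
        rw [hx₀i i]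
        split
        · next h =>
            rw [h]
            have : a * y j * y j = a * (y j)^2 := by ring
            rw [this]; positivity
        · simp
    have hle : Fobj a lam y xs ≤ C := by
      rw [← hv0]
      exact hmin (Set.mem_univ x₀)
    rw [key xs] at hle
    have h1 : 0 ≤ ∑ i, (|xs i| - xs i * y i / lam) :=
      Finset.sum_nonneg fun i _ => hterm xs i
    have h2 : 0 ≤ (‖xs‖ - a*lam)^2 / (2*lam) := by positivity
    have hS0 : (∑ i, (|xs i| - xs i * y i / lam)) = 0 := by linarith
    have hsq : (‖xs‖ - a*lam)^2 / (2*lam) = 0 := by linarith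
    have hnorm : ‖xs‖ = a * lam := by
      have : (‖xs‖ - a*lam)^2 = 0 := by
        rcases div_eq_zero_iff.mp hsq with h | h
        · exact h
        · linarith
      have := pow_eq_zero_iff (n := 2) (by norm_num) |>.mp this
      linarith
    have hterm0 : ∀ i, |xs i| - xs i * y i / lam = 0 := by
      intro i
      have := (Finset.sum_eq_zero_iff_of_nonneg (fun i _ => hterm xs i)).mp hS0
      exact this i (Finset.mem_univ i)
    refine ⟨?_, hnorm, ?_⟩
    · intro i hi
      have h0 := hterm0 i
      have heq : xs i * y i = |xs i| * lam := by
        field_simp at h0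
        linarith
      have : |xs i| * lam ≤ |xs i| * |y i| := by
        rw [← heq]
        calc xs i * y i ≤ |xs i * y i| := le_abs_self _
          _ = |xs i| * |y i| := abs_mul _ _
      have : |xs i| = 0 := by nlinarith [abs_nonneg (xs i)]
      exact abs_eq_zero.mp this
    · intro i
      have h0 := hterm0 i
      have heq : xs i * y i = |xs i| * lam := by
        field_simp at h0
        linarith
      rw [heq]
      positivity
  · rintro ⟨h1, h2, h3⟩
    intro x _
    simp only
    rw [hval xs h1 h2 h3]
    exact hlow x
end

section
/- Let F(x) = ‖x‖₁ - α‖x‖₂ + (1/(2λ))‖x - y‖₂² with y ∈ ℝ^N, λ > 0, α ≥ 0. For any nonzero x satisfying the first-order optimality condition (1 - αλ/‖x‖₂)x = y - λp with p ∈ ∂‖x‖₁, one has F(x) = -(1/(2λ))‖x‖₂² + (1/(2λ))‖y‖₂². In particular, F(x) < F(0) for every such x ≠ 0. -/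
open Finset Filter Set
open scoped RealInnerProductSpace

/-- `p` is a subgradient of the ℓ¹ norm at `x`. -/
def l1Subdiff {N : ℕ} (x p : EuclideanSpace ℝ (Fin N)) : Prop :=
  ∀ i, (x i ≠ 0 → p i = Real.sign (x i)) ∧ (x i = 0 → |p i| ≤ 1)

theorem stmt4 {N : ℕ} (a lam : ℝ) (hlam : 0 < lam) (ha : 0 ≤ a)
    (y x p : EuclideanSpace ℝ (Fin N)) (hx : x ≠ 0)
    (hp : l1Subdiff x p)
    (hopt : (1 - a * lam / ‖x‖) • x = y - lam • p) :
    Fobj a lam y x = -(1 / (2 * lam)) * ‖x‖ ^ 2 + 1 / (2 * lam) * ‖y‖ ^ 2 ∧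
      Fobj a lam y x < Fobj a lam y 0 := by
  have hxn : ‖x‖ ≠ 0 := norm_ne_zero_iff.mpr hx
  have hxpos : 0 < ‖x‖ := (norm_pos_iff).mpr hx
  have hip : ⟪x, p⟫ = norm1 x := by
    rw [PiLp.inner_apply, norm1]
    refine Finset.sum_congr rfl fun i _ => ?_
    by_cases h : x i = 0
    · simp [h]
    · rw [(hp i).1 h]
      rcases lt_or_gt_of_ne h with hlt | hgt
      · rw [Real.sign_of_neg hlt, abs_of_neg hlt, RCLike.inner_apply]; simp
      · rw [Real.sign_of_pos hgt, abs_of_pos hgt, RCLike.inner_apply]; simp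
  have hxy : ⟪x, y⟫ = ‖x‖ ^ 2 - a * lam * ‖x‖ + lam * norm1 x := by
    have h := congrArg (fun z => ⟪x, z⟫) hopt
    simp only [inner_smul_right, inner_sub_right, real_inner_self_eq_norm_sq] at h
    rw [hip] at h
    have : (1 - a * lam / ‖x‖) * ‖x‖ ^ 2 = ‖x‖ ^ 2 - a * lam * ‖x‖ := by
      field_simp
    rw [this] at h
    linarith
  have hnsq : ‖x - y‖ ^ 2 = ‖x‖ ^ 2 - 2 * ⟪x, y⟫ + ‖y‖ ^ 2 := by
    rw [@norm_sub_sq_real]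
  have heq : Fobj a lam y x = -(1 / (2 * lam)) * ‖x‖ ^ 2 + 1 / (2 * lam) * ‖y‖ ^ 2 := by
    rw [Fobj, hnsq, hxy]
    field_simp
    ring
  refine ⟨heq, ?_⟩
  have h0 : Fobj a lam y 0 = 1 / (2 * lam) * ‖y‖ ^ 2 := by
    simp [Fobj, norm1]
  rw [heq, h0]
  have : 0 < ‖x‖ ^ 2 := by positivity
  have hc : 0 < 1 / (2 * lam) := by positivity
  nlinarith
end

section
/- Let any global minimizer x* of F(x) = ‖x‖₁ - α‖x‖₂ + (1/(2λ))‖x - y‖₂² be given, with y ∈ ℝ^N, λ > 0, α ≥ 0. Then for every x ∈ ℝ^N, F(x*) - F(x) ≤ min(α/(2‖x*‖₂) - 1/(2λ), 0)·‖x* - x‖₂², where by convention α/0 = 0 if α = 0 and α/0 = +∞ (so the min is 0) if α > 0 and x* = 0. -/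
open Finset Filter Set
open scoped RealInnerProductSpace

/-!
Since `‖x‖ ≥ ⟪x* / ‖x*‖, x⟫` with equality at `x*`, replacing `‖·‖` by this linearisation turns
`F` into a majorant `G` that touches `F` at `x*`. So `x*` also minimises `G`, which is
`1/λ`-strongly convex, whence `G x ≥ G x* + ‖x - x*‖² / (2λ)`. The linearisation error
`‖x‖ - ⟪x* / ‖x*‖, x⟫` is at most `‖x - x*‖² / (2‖x*‖)` by AM-GM, which gives the loss
`α / (2‖x*‖)`.
-/

open scoped Topology

section StrongConvexity

variable {E : Type*} [NormedAddCommGroup E] [NormedSpace ℝ E] {s : Set E} {m : ℝ} {f : E → ℝ}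

theorem StrongConvexOn.add_sq_le_of_isMinOn (hf : StrongConvexOn s m f) {x₀ x : E}
    (hmin : IsMinOn f s x₀) (hx₀ : x₀ ∈ s) (hx : x ∈ s) :
    f x₀ + m / 2 * ‖x - x₀‖ ^ 2 ≤ f x := by
  set C := m / 2 * ‖x - x₀‖ ^ 2
  -- Compare `f x₀` with the value at `t • x + (1 - t) • x₀` and let `t → 0`.
  have hsegment : ∀ t ∈ Ioo (0 : ℝ) 1, f x₀ ≤ f x - (1 - t) * C := by
    intro t ⟨ht₀, ht₁⟩
    have hconv := hf.2 hx hx₀ ht₀.le (sub_nonneg.2 ht₁.le) (add_sub_cancel t 1)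
    have hle : f x₀ ≤ f (t • x + (1 - t) • x₀) :=
      hmin (hf.1 hx hx₀ ht₀.le (sub_nonneg.2 ht₁.le) (add_sub_cancel t 1))
    change f _ ≤ t * f x + (1 - t) * f x₀ - t * (1 - t) * C at hconv
    refine le_of_mul_le_mul_left ?_ ht₀
    linarith
  have hlim : Tendsto (fun t : ℝ ↦ f x - (1 - t) * C) (𝓝[>] 0) (𝓝 (f x - C)) := by
    have hcont : Continuous fun t : ℝ ↦ f x - (1 - t) * C := by fun_prop
    simpa using (hcont.tendsto 0).mono_left nhdsWithin_le_nhds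
  have := ge_of_tendsto hlim (eventually_of_mem (Ioo_mem_nhdsGT one_pos) hsegment)
  linarith

end StrongConvexity

section InnerProductSpace

variable {E : Type*} [NormedAddCommGroup E] [InnerProductSpace ℝ E]

theorem ConvexOn.strongConvexOn_add_mul_sq_norm_sub {s : Set E} {h : E → ℝ}
    (hh : ConvexOn ℝ s h) (c : ℝ) (y : E) :
    StrongConvexOn s (2 * c) fun z ↦ h z + c * ‖z - y‖ ^ 2 := by
  rw [strongConvexOn_iff_convex]
  refine ((hh.add (((-(2 * c)) • innerₛₗ ℝ y).convexOn hh.1)).add_const (c * ‖y‖ ^ 2)).congr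
    fun z _ ↦ ?_
  simp only [Pi.add_apply, LinearMap.smul_apply, innerₛₗ_apply_apply, smul_eq_mul,
    norm_sub_sq_real, real_inner_comm z y]
  ring

theorem real_inner_inv_norm_smul_self (x : E) : ⟪‖x‖⁻¹ • x, x⟫ = ‖x‖ := by
  rcases eq_or_ne x 0 with rfl | hx
  · simp
  · rw [real_inner_smul_left, real_inner_self_eq_norm_sq, sq, ← mul_assoc,
      inv_mul_cancel₀ (norm_ne_zero_iff.2 hx), one_mul]

theorem real_inner_inv_norm_smul_le_norm (x z : E) : ⟪‖x‖⁻¹ • x, z⟫ ≤ ‖z‖ :=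
  (real_inner_le_norm _ _).trans <| mul_le_of_le_one_left (norm_nonneg z)
    (mem_closedBall_zero_iff.1 (inv_norm_smul_mem_unitClosedBall x))

theorem norm_sub_real_inner_inv_norm_smul_le {x : E} (hx : x ≠ 0) (z : E) :
    ‖z‖ - ⟪‖x‖⁻¹ • x, z⟫ ≤ ‖z - x‖ ^ 2 / (2 * ‖x‖) := by
  have hpos : 0 < ‖x‖ := norm_pos_iff.2 hx
  rw [real_inner_smul_left, le_div_iff₀ (by positivity), norm_sub_sq_real, real_inner_comm]
  field_simp
  nlinarith [sq_nonneg (‖z‖ - ‖x‖)]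

theorem IsMinOn.quadratic_growth_of_convexOn_sub_norm {h : E → ℝ} (hh : ConvexOn ℝ univ h)
    {a : ℝ} (ha : 0 ≤ a) {c : ℝ} {y x₀ : E}
    (hmin : IsMinOn (fun z ↦ h z - a * ‖z‖ + c * ‖z - y‖ ^ 2) univ x₀) (hx₀ : x₀ ≠ 0 ∨ a = 0)
    (x : E) :
    h x₀ - a * ‖x₀‖ + c * ‖x₀ - y‖ ^ 2 + (c - a / (2 * ‖x₀‖)) * ‖x - x₀‖ ^ 2 ≤
      h x - a * ‖x‖ + c * ‖x - y‖ ^ 2 := by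
  set w := ‖x₀‖⁻¹ • x₀
  set G : E → ℝ := fun z ↦ (h z - a * ⟪w, z⟫) + c * ‖z - y‖ ^ 2
  have hG_ge : ∀ z, h z - a * ‖z‖ + c * ‖z - y‖ ^ 2 ≤ G z := fun z ↦ by
    have := mul_le_mul_of_nonneg_left (real_inner_inv_norm_smul_le_norm x₀ z) ha
    simp only [G]
    linarith
  have hG_x₀ : G x₀ = h x₀ - a * ‖x₀‖ + c * ‖x₀ - y‖ ^ 2 := by
    simp only [G, w, real_inner_inv_norm_smul_self]
  have hG_min : IsMinOn G univ x₀ := fun z _ ↦ hG_x₀ ▸ (hmin (mem_univ z)).trans (hG_ge z)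
  have hG_convex : StrongConvexOn univ (2 * c) G :=
    (hh.sub ((a • innerₛₗ ℝ w).concaveOn convex_univ)).strongConvexOn_add_mul_sq_norm_sub c y
  have hgrowth := hG_convex.add_sq_le_of_isMinOn hG_min (mem_univ _) (mem_univ x)
  have hgap : a * ‖x‖ - a * ⟪w, x⟫ ≤ a / (2 * ‖x₀‖) * ‖x - x₀‖ ^ 2 := by
    rcases hx₀ with hx₀ | rfl
    · have := mul_le_mul_of_nonneg_left (norm_sub_real_inner_inv_norm_smul_le hx₀ x) ha
      rw [mul_sub, mul_div_assoc'] at this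
      rwa [div_mul_eq_mul_div]
    · simp
  simp only [G] at hgrowth
  linarith

end InnerProductSpace

theorem convexOn_norm1 {N : ℕ} : ConvexOn ℝ univ (norm1 : EuclideanSpace ℝ (Fin N) → ℝ) := by
  have habs (i : Fin N) : ConvexOn ℝ univ fun x : EuclideanSpace ℝ (Fin N) ↦ |x i| :=
    (convexOn_norm convex_univ).comp_linearMap (EuclideanSpace.projₗ i)
  have hsum := Finset.sum_induction (fun i (x : EuclideanSpace ℝ (Fin N)) ↦ |x i|)
    (ConvexOn ℝ univ) (fun _ _ ↦ ConvexOn.add) (convexOn_const 0 convex_univ) (s := univ)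
    fun i _ ↦ habs i
  exact hsum.congr fun x _ ↦ by simp only [Finset.sum_apply, norm1]

open scoped Classical

theorem stmt5_general {N : ℕ} (a lam : ℝ) (ha : 0 ≤ a)
    (y xs : EuclideanSpace ℝ (Fin N))
    (hmin : IsMinOn (Fobj a lam y) Set.univ xs) :
    ∀ x, Fobj a lam y xs - Fobj a lam y x ≤
      (if xs = 0 ∧ 0 < a then 0 else min (a / (2 * ‖xs‖) - 1 / (2 * lam)) 0) *
        ‖xs - x‖ ^ 2 := by
  intro x
  have hle : Fobj a lam y xs ≤ Fobj a lam y x := hmin (mem_univ x)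
  split_ifs with hdeg
  · simpa using hle
  · have hxs : xs ≠ 0 ∨ a = 0 := (not_and_or.1 hdeg).imp_right fun h ↦ le_antisymm (not_lt.1 h) ha
    have hgrowth := hmin.quadratic_growth_of_convexOn_sub_norm convexOn_norm1 ha hxs x
    rw [min_mul_of_nonneg _ _ (sq_nonneg _), zero_mul, norm_sub_rev]
    unfold Fobj at hle ⊢
    exact le_min (by linarith) (by linarith)

theorem stmt5 {N : ℕ} (a lam : ℝ) (hlam : 0 < lam) (ha : 0 ≤ a)
    (y xs : EuclideanSpace ℝ (Fin N))
    (hmin : IsMinOn (Fobj a lam y) Set.univ xs) :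
    ∀ x, Fobj a lam y xs - Fobj a lam y x ≤
      (if xs = 0 ∧ 0 < a then 0 else min (a / (2 * ‖xs‖) - 1 / (2 * lam)) 0) *
        ‖xs - x‖ ^ 2 :=
  stmt5_general a lam ha y xs hmin
end

section
/- Let α > 0, λ > 0, y ∈ ℝ^N, and suppose x* ∈ prox_{λ r_α}(y) is a nonzero minimizer satisfying the optimality condition p = y/λ - (1/λ - α/‖x*‖₂)x* ∈ ∂‖x*‖₁. Then for every x ∈ ℝ^N, F(x*) - F(x) ≤ (α/(2‖x*‖₂) - 1/(2λ))‖x* - x‖₂², where F(x) = ‖x‖₁ - α‖x‖₂ + (1/(2λ))‖x - y‖₂². -/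
open Finset Filter Set
open scoped RealInnerProductSpace

/-!
The subgradient inequality for `‖·‖₁` at `xs` bounds `‖xs‖₁ - ‖x‖₁` by `⟪p, xs - x⟫`. With
`p = y/λ - (1/λ - α/‖xs‖) xs`, the terms coming from `y/λ - xs/λ` combine with the quadratic
fidelity terms into exactly `-‖xs - x‖² / (2λ)`, and what remains, `α (‖x‖ - ⟪xs, x⟫/‖xs‖)`, is at
most `α ‖xs - x‖² / (2‖xs‖)` by Cauchy–Schwarz and `2‖xs‖‖x‖ ≤ ‖xs‖² + ‖x‖²`.
-/

section InnerProductSpace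

variable {E : Type*} [NormedAddCommGroup E] [InnerProductSpace ℝ E]

theorem norm_sub_inner_div_norm_le {u : E} (hu : u ≠ 0) (v : E) :
    ‖v‖ - ⟪u, v⟫ / ‖u‖ ≤ ‖u - v‖ ^ 2 / (2 * ‖u‖) := by
  have hu' : 0 < ‖u‖ := norm_pos_iff.mpr hu
  have hlhs : (‖v‖ - ⟪u, v⟫ / ‖u‖) * (2 * ‖u‖) = 2 * (‖u‖ * ‖v‖) - 2 * ⟪u, v⟫ := by
    field_simp
  rw [le_div_iff₀ (by positivity), hlhs, norm_sub_sq_real]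
  nlinarith [sq_nonneg (‖u‖ - ‖v‖)]

theorem objective_sub_le_of_inner_le {g : E → ℝ} {a lam : ℝ} (ha : 0 ≤ a) {y xs : E}
    (hxs : xs ≠ 0) (x : E)
    (hsub : ⟪(1 / lam) • y - (1 / lam - a / ‖xs‖) • xs, x - xs⟫ ≤ g x - g xs) :
    (g xs - a * ‖xs‖ + 1 / (2 * lam) * ‖xs - y‖ ^ 2) - (g x - a * ‖x‖ + 1 / (2 * lam) * ‖x - y‖ ^ 2)
      ≤ (a / (2 * ‖xs‖) - 1 / (2 * lam)) * ‖xs - x‖ ^ 2 := by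
  have hxs' : ‖xs‖ ≠ 0 := norm_ne_zero_iff.mpr hxs
  have hquad : ‖x - y‖ ^ 2 = ‖xs - y‖ ^ 2 - 2 * ⟪xs - y, xs - x⟫ + ‖xs - x‖ ^ 2 := by
    rw [← norm_sub_sq_real, sub_sub_sub_cancel_left]
  have hinner : ⟪(1 / lam) • y - (1 / lam - a / ‖xs‖) • xs, x - xs⟫
      = 1 / lam * ⟪xs - y, xs - x⟫ + a / ‖xs‖ * ⟪xs, x⟫ - a * ‖xs‖ := by
    simp only [inner_sub_left, inner_sub_right, real_inner_smul_left, real_inner_self_eq_norm_sq]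
    field_simp
    ring
  have hcs := mul_le_mul_of_nonneg_left (norm_sub_inner_div_norm_le hxs x) ha
  rw [hinner] at hsub
  rw [hquad]
  linear_combination hsub + hcs

end InnerProductSpace

namespace l1Subdiff

variable {N : ℕ} {x p : EuclideanSpace ℝ (Fin N)}

theorem abs_le_one (hp : l1Subdiff x p) (i : Fin N) : |p i| ≤ 1 := by
  by_cases h : x i = 0
  · exact (hp i).2 h
  · rw [(hp i).1 h]
    rcases lt_or_gt_of_ne h with h | h <;> simp [Real.sign_of_neg, Real.sign_of_pos, h]

theorem mul_self_eq_abs (hp : l1Subdiff x p) (i : Fin N) : p i * x i = |x i| := by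
  by_cases h : x i = 0
  · simp [h]
  · rw [(hp i).1 h]
    rcases lt_or_gt_of_ne h with h | h
    · simp [Real.sign_of_neg h, abs_of_neg h]
    · simp [Real.sign_of_pos h, abs_of_pos h]

theorem inner_sub_le (hp : l1Subdiff x p) (z : EuclideanSpace ℝ (Fin N)) :
    ⟪p, z - x⟫ ≤ norm1 z - norm1 x := by
  simp only [PiLp.inner_apply, PiLp.sub_apply, RCLike.inner_apply, conj_trivial, norm1,
    ← Finset.sum_sub_distrib]
  refine Finset.sum_le_sum fun i _ => ?_
  have hz : p i * z i ≤ |z i| := by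
    refine (le_abs_self _).trans ?_
    rw [abs_mul]
    exact mul_le_of_le_one_left (abs_nonneg _) (hp.abs_le_one i)
  linarith [hp.mul_self_eq_abs i]

end l1Subdiff

theorem stmt6_general {N : ℕ} (a lam : ℝ) (ha : 0 < a)
    (y xs : EuclideanSpace ℝ (Fin N)) (hxs : xs ≠ 0)
    (hp : l1Subdiff xs ((1 / lam) • y - (1 / lam - a / ‖xs‖) • xs)) :
    ∀ x, Fobj a lam y xs - Fobj a lam y x ≤
      (a / (2 * ‖xs‖) - 1 / (2 * lam)) * ‖xs - x‖ ^ 2 :=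
  fun x => objective_sub_le_of_inner_le ha.le hxs x (hp.inner_sub_le x)

theorem stmt6 {N : ℕ} (a lam : ℝ) (hlam : 0 < lam) (ha : 0 < a)
    (y xs : EuclideanSpace ℝ (Fin N)) (hxs : xs ≠ 0)
    (hmin : IsMinOn (Fobj a lam y) Set.univ xs)
    (hp : l1Subdiff xs ((1 / lam) • y - (1 / lam - a / ‖xs‖) • xs)) :
    ∀ x, Fobj a lam y xs - Fobj a lam y x ≤
      (a / (2 * ‖xs‖) - 1 / (2 * lam)) * ‖xs - x‖ ^ 2 :=
  stmt6_general a lam ha y xs hxs hp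
end

section
/- Let l: ℝ^N → ℝ be differentiable with L-Lipschitz gradient, E(x) = ‖x‖₁ - α‖x‖₂ + l(x) with α ≥ 0, and let 0 < λ < 1/L. If x^{k+1} ∈ prox_{λ r_α}(x^k - λ∇l(x^k)) (forward-backward splitting step), then E(x^k) - E(x^{k+1}) ≥ (1/(2λ) - L/2)‖x^{k+1} - x^k‖₂². In particular the sequence E(x^k) is nonincreasing. -/
open Finset Filter Set
open scoped RealInnerProductSpace

/-! Write `r = ‖·‖₁ - α‖·‖₂` and `v = x^{k+1} - x^k`. Comparing the proximal objective at
`x^{k+1}` with its value at `x^k` and expanding the squares gives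
`r(x^{k+1}) + ⟪∇l(x^k), v⟫ + ‖v‖²/(2λ) ≤ r(x^k)`. The descent lemma
`l(x^{k+1}) ≤ l(x^k) + ⟪∇l(x^k), v⟫ + L/2 ‖v‖²` has the same inner product, so adding the two
cancels it. -/

section LipschitzGradient

variable {E : Type*} [NormedAddCommGroup E] [InnerProductSpace ℝ E] [CompleteSpace E]

lemma HasGradientAt.hasDerivAt_add_smul {f : E → ℝ} {g x v : E} {t : ℝ}
    (hf : HasGradientAt f g (x + t • v)) :
    HasDerivAt (fun s : ℝ => f (x + s • v)) ⟪g, v⟫ t := by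
  have hline : HasDerivAt (fun s : ℝ => x + s • v) v t := by
    simpa using ((hasDerivAt_id t).smul_const v).const_add x
  have h := hf.hasFDerivAt.comp_hasDerivAt t hline
  simp only [Function.comp_def, InnerProductSpace.toDual_apply_apply] at h
  exact h

theorem le_add_inner_add_sq_of_lipschitz_gradient {f : E → ℝ} {g : E → E} {L : ℝ}
    (hf : ∀ z, HasGradientAt f (g z) z) (hg : ∀ z w, ‖g z - g w‖ ≤ L * ‖z - w‖) (x v : E) :
    f (x + v) ≤ f x + ⟪g x, v⟫ + L / 2 * ‖v‖ ^ 2 := by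
  set φ : ℝ → ℝ := fun t => f (x + t • v) - t * ⟪g x, v⟫ - L / 2 * t ^ 2 * ‖v‖ ^ 2
  have hφ : ∀ t, HasDerivAt φ (⟪g (x + t • v) - g x, v⟫ - L * t * ‖v‖ ^ 2) t := by
    intro t
    have h := (((hf (x + t • v)).hasDerivAt_add_smul).sub
      ((hasDerivAt_id t).mul_const ⟪g x, v⟫)).sub
      (((hasDerivAt_pow 2 t).const_mul (L / 2)).mul_const (‖v‖ ^ 2))
    refine h.congr_deriv ?_
    rw [inner_sub_left]
    push_cast
    ring
  have hφ_nonpos : ∀ t ∈ interior (Icc (0 : ℝ) 1),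
      ⟪g (x + t • v) - g x, v⟫ - L * t * ‖v‖ ^ 2 ≤ 0 := by
    intro t ht
    have ht0 : 0 ≤ t := (interior_subset ht).1
    have hlip : ‖g (x + t • v) - g x‖ ≤ L * t * ‖v‖ := by
      simpa [norm_smul, abs_of_nonneg ht0, mul_assoc] using hg (x + t • v) x
    rw [sub_nonpos]
    calc ⟪g (x + t • v) - g x, v⟫ ≤ ‖g (x + t • v) - g x‖ * ‖v‖ := real_inner_le_norm _ _
      _ ≤ L * t * ‖v‖ * ‖v‖ := by gcongr
      _ = L * t * ‖v‖ ^ 2 := by ring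
  have hanti : AntitoneOn φ (Icc 0 1) :=
    antitoneOn_of_hasDerivWithinAt_nonpos (convex_Icc 0 1)
      (fun t _ => (hφ t).continuousAt.continuousWithinAt)
      (fun t _ => (hφ t).hasDerivWithinAt) hφ_nonpos
  have h := hanti (left_mem_Icc.mpr zero_le_one) (right_mem_Icc.mpr zero_le_one) zero_le_one
  simp only [φ, zero_smul, one_smul, add_zero] at h
  linarith

end LipschitzGradient

lemma IsMinOn.add_inner_add_sq_le_of_prox {E : Type*} [NormedAddCommGroup E]
    [InnerProductSpace ℝ E] {r : E → ℝ} {lam : ℝ} (hlam : lam ≠ 0) {x x₁ d : E}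
    (hmin : IsMinOn (fun z => r z + 1 / (2 * lam) * ‖z - (x - lam • d)‖ ^ 2) univ x₁) :
    r x₁ + ⟪d, x₁ - x⟫ + 1 / (2 * lam) * ‖x₁ - x‖ ^ 2 ≤ r x := by
  have h := isMinOn_univ_iff.mp hmin x
  have hx₁ : x₁ - (x - lam • d) = (x₁ - x) + lam • d := by abel
  simp only [sub_sub_cancel, hx₁, norm_add_sq_real, inner_smul_right, norm_smul,
    Real.norm_eq_abs, mul_pow, sq_abs] at h
  have hcancel : 1 / (2 * lam) * (2 * (lam * ⟪x₁ - x, d⟫)) = ⟪d, x₁ - x⟫ := by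
    rw [real_inner_comm]; field_simp
  linarith

theorem stmt8_general {N : ℕ} (a lam L : ℝ)
    (hlam : 0 < lam)
    (l : EuclideanSpace ℝ (Fin N) → ℝ)
    (g : EuclideanSpace ℝ (Fin N) → EuclideanSpace ℝ (Fin N))
    (hg : ∀ z, HasGradientAt l (g z) z)
    (hLip : ∀ z w, ‖g z - g w‖ ≤ L * ‖z - w‖)
    (xk xk1 : EuclideanSpace ℝ (Fin N))
    (hstep : IsMinOn (Fobj a lam (xk - lam • g xk)) Set.univ xk1) :
    (norm1 xk - a * ‖xk‖ + l xk) - (norm1 xk1 - a * ‖xk1‖ + l xk1) ≥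
      (1 / (2 * lam) - L / 2) * ‖xk1 - xk‖ ^ 2 := by
  have hprox := IsMinOn.add_inner_add_sq_le_of_prox (r := fun x => norm1 x - a * ‖x‖)
    hlam.ne' hstep
  have hdescent := le_add_inner_add_sq_of_lipschitz_gradient hg hLip xk (xk1 - xk)
  rw [add_sub_cancel] at hdescent
  linarith

theorem stmt8 {N : ℕ} (a lam L : ℝ) (ha : 0 ≤ a) (hL : 0 < L)
    (hlam : 0 < lam) (hlamL : lam < 1 / L)
    (l : EuclideanSpace ℝ (Fin N) → ℝ)
    (g : EuclideanSpace ℝ (Fin N) → EuclideanSpace ℝ (Fin N))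
    (hg : ∀ z, HasGradientAt l (g z) z)
    (hLip : ∀ z w, ‖g z - g w‖ ≤ L * ‖z - w‖)
    (xk xk1 : EuclideanSpace ℝ (Fin N))
    (hstep : IsMinOn (Fobj a lam (xk - lam • g xk)) Set.univ xk1) :
    (norm1 xk - a * ‖xk‖ + l xk) - (norm1 xk1 - a * ‖xk1‖ + l xk1) ≥
      (1 / (2 * lam) - L / 2) * ‖xk1 - xk‖ ^ 2 :=
  stmt8_general a lam L hlam l g hg hLip xk xk1 hstep
end

section
/- For the ADMM scheme on min r(x) + l(y) s.t. x = y, with l having L-Lipschitz gradient, the augmented Lagrangian satisfies L_δ(x^{k+1}, y^{k+1}, u^{k+1}) - L_δ(x^{k+1}, y^k, u^k) ≤ (3L/2 + L²/δ - δ/2)‖y^{k+1} - y^k‖₂²; if moreover l is convex, the bound improves to (L²/δ - δ/2)‖y^{k+1} - y^k‖₂². -/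
open Finset Filter Set
open scoped RealInnerProductSpace

/-- Augmented Lagrangian for the ADMM splitting of  min r(x) + l(y)  s.t.  x = y. -/
noncomputable def ALag {N : ℕ} (r l : EuclideanSpace ℝ (Fin N) → ℝ) (del : ℝ)
    (x y u : EuclideanSpace ℝ (Fin N)) : ℝ :=
  r x + l y + del * (inner ℝ u (x - y) : ℝ) + del / 2 * ‖x - y‖ ^ 2

/-! The dual update turns the optimality condition of the `y`-step into `∇l(y^{k+1}) = δ u^{k+1}`,
so the Lipschitz gradient gives `δ‖u^{k+1} - u^k‖ ≤ L‖y^{k+1} - y^k‖`. At fixed `x^{k+1}` the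
change of the augmented Lagrangian is
`l(y^{k+1}) - l(y^k) - ⟨∇l(y^{k+1}), y^{k+1} - y^k⟩ + δ‖u^{k+1} - u^k‖² - (δ/2)‖y^{k+1} - y^k‖²`;
the first three terms are at most `(L/2)‖y^{k+1} - y^k‖²` by the descent lemma, and at most `0`
when `l` is convex. -/

section Gradient

variable {E : Type*} [NormedAddCommGroup E] [InnerProductSpace ℝ E] [CompleteSpace E]

theorem HasGradientAt.hasDerivAt_comp_add_smul {l : E → ℝ} {g' a d : E} {t : ℝ}
    (h : HasGradientAt l g' (a + t • d)) :
    HasDerivAt (fun s : ℝ => l (a + s • d)) ⟪g', d⟫ t := by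
  have hline : HasDerivAt (fun s : ℝ => a + s • d) d t := by
    simpa using ((hasDerivAt_id t).smul_const d).const_add a
  have hcomp := h.hasFDerivAt.comp_hasDerivAt t hline
  simp only [Function.comp_def, InnerProductSpace.toDual_apply_apply] at hcomp
  exact hcomp

theorem quadratic_lower_bound_of_lipschitz_gradient {L : ℝ} {l : E → ℝ} {g : E → E}
    (hg : ∀ z, HasGradientAt l (g z) z) (hLip : ∀ z w, ‖g z - g w‖ ≤ L * ‖z - w‖) (a b : E) :
    l a + ⟪g a, b - a⟫ - L / 2 * ‖b - a‖ ^ 2 ≤ l b := by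
  set d := b - a
  set ψ : ℝ → ℝ := fun t => l (a + t • d) - t * ⟪g a, d⟫ + L / 2 * ‖d‖ ^ 2 * t ^ 2
  have hψ : ∀ t, HasDerivAt ψ (⟪g (a + t • d) - g a, d⟫ + L * ‖d‖ ^ 2 * t) t := by
    intro t
    have hq : HasDerivAt (fun t : ℝ => L / 2 * ‖d‖ ^ 2 * t ^ 2) (L * ‖d‖ ^ 2 * t) t :=
      ((hasDerivAt_pow 2 t).const_mul _).congr_deriv (by norm_num; ring)
    exact (((hg _).hasDerivAt_comp_add_smul.sub ((hasDerivAt_id t).mul_const ⟪g a, d⟫)).add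
      hq).congr_deriv (by rw [inner_sub_left]; simp)
  have hψ_nonneg : ∀ t ∈ interior (Ici (0 : ℝ)),
      0 ≤ ⟪g (a + t • d) - g a, d⟫ + L * ‖d‖ ^ 2 * t := by
    rw [interior_Ici]
    intro t (ht : 0 < t)
    have hbound : ‖g (a + t • d) - g a‖ * ‖d‖ ≤ L * ‖d‖ ^ 2 * t := by
      calc ‖g (a + t • d) - g a‖ * ‖d‖ ≤ L * ‖(a + t • d) - a‖ * ‖d‖ := by
            gcongr; exact hLip _ _
        _ = L * ‖d‖ ^ 2 * t := by
            rw [add_sub_cancel_left, norm_smul, Real.norm_of_nonneg ht.le]; ring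
    linarith [neg_le_of_abs_le (abs_real_inner_le_norm (g (a + t • d) - g a) d)]
  have hmono : MonotoneOn ψ (Ici 0) :=
    monotoneOn_of_hasDerivWithinAt_nonneg (convex_Ici 0)
      (fun t _ => (hψ t).continuousAt.continuousWithinAt)
      (fun t _ => (hψ t).hasDerivWithinAt) hψ_nonneg
  have h01 : ψ 0 ≤ ψ 1 := hmono self_mem_Ici (mem_Ici.2 zero_le_one) zero_le_one
  have hψ0 : ψ 0 = l a := by simp [ψ]
  have hψ1 : ψ 1 = l b - ⟪g a, d⟫ + L / 2 * ‖d‖ ^ 2 := by simp [ψ, d]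
  linarith

theorem ConvexOn.add_inner_sub_le {s : Set E} {l : E → ℝ} {g' a b : E} (hl : ConvexOn ℝ s l)
    (ha : a ∈ s) (hb : b ∈ s) (hg : HasGradientAt l g' a) :
    l a + ⟪g', b - a⟫ ≤ l b := by
  have hline : (fun t : ℝ => l (a + t • (b - a))) = l ∘ AffineMap.lineMap a b := by
    funext t; simp [AffineMap.lineMap_apply_module', add_comm]
  have hderiv : HasDerivAt (l ∘ AffineMap.lineMap a b) ⟪g', b - a⟫ (0 : ℝ) :=
    hline ▸ HasGradientAt.hasDerivAt_comp_add_smul (t := 0) (by simpa using hg)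
  have hslope := (hl.comp_affineMap (AffineMap.lineMap a b)).le_slope_of_hasDerivAt
    (by simpa using ha) (by simpa using hb) zero_lt_one hderiv
  simp only [slope, sub_zero, inv_one, Function.comp_apply, AffineMap.lineMap_apply_one,
    AffineMap.lineMap_apply_zero, vsub_eq_sub, smul_eq_mul, one_mul] at hslope
  linarith

end Gradient

theorem gradient_eq_smul_of_dual_update {E : Type*} [AddCommGroup E] [Module ℝ E] {g : E → E}
    {del : ℝ} {x y u u' : E}
    (hopt : g y + del • (y - x - u) = 0) (hu' : u' = u + x - y) : g y = del • u' := by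
  rw [hu', eq_neg_of_add_eq_zero_left hopt]
  module

theorem mul_norm_sub_sq_le_of_lipschitz {E : Type*} [NormedAddCommGroup E] [NormedSpace ℝ E]
    {g : E → E} {L del : ℝ} {y y' u u' : E} (hdel : 0 < del)
    (hLip : ∀ z w, ‖g z - g w‖ ≤ L * ‖z - w‖) (hy' : g y' = del • u') (hy : g y = del • u) :
    del * ‖u' - u‖ ^ 2 ≤ L ^ 2 / del * ‖y' - y‖ ^ 2 := by
  have hdual : del * ‖u' - u‖ ≤ L * ‖y' - y‖ := by
    calc del * ‖u' - u‖ = ‖g y' - g y‖ := by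
          rw [hy', hy, ← smul_sub, norm_smul, Real.norm_of_nonneg hdel.le]
      _ ≤ L * ‖y' - y‖ := hLip y' y
  have hsq : (del * ‖u' - u‖) ^ 2 ≤ (L * ‖y' - y‖) ^ 2 :=
    pow_le_pow_left₀ (by positivity) hdual 2
  rw [div_mul_eq_mul_div, le_div_iff₀ hdel]
  linarith

section AugmentedLagrangian

variable {N : ℕ} {r l : EuclideanSpace ℝ (Fin N) → ℝ} {del : ℝ}

theorem ALag_sub_ALag_of_dual_update {x y y' u u' : EuclideanSpace ℝ (Fin N)}
    (hu' : u' = u + x - y') :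
    ALag r l del x y' u' - ALag r l del x y u =
      l y' - l y - del * ⟪u', y' - y⟫ + del * ‖u' - u‖ ^ 2 - del / 2 * ‖y' - y‖ ^ 2 := by
  have hxy' : x - y' = u' - u := by rw [hu']; abel
  have hxy : x - y = (u' - u) + (y' - y) := by rw [hu']; abel
  have he : ⟪u', u' - u⟫ - ⟪u, u' - u⟫ = ‖u' - u‖ ^ 2 := by
    rw [← inner_sub_left, real_inner_self_eq_norm_sq]
  have hdv : ⟪u, y' - y⟫ + ⟪u' - u, y' - y⟫ = ⟪u', y' - y⟫ := by
    rw [← inner_add_left, add_sub_cancel]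
  rw [ALag, ALag, hxy', hxy, norm_add_sq_real, inner_add_right]
  linear_combination del * he - del * hdv

theorem ALag_sub_ALag_le {g : EuclideanSpace ℝ (Fin N) → EuclideanSpace ℝ (Fin N)} {L : ℝ}
    {x y y' u u' : EuclideanSpace ℝ (Fin N)} (hdel : 0 < del)
    (hLip : ∀ z w, ‖g z - g w‖ ≤ L * ‖z - w‖) (hu' : u' = u + x - y')
    (hy' : g y' = del • u') (hy : g y = del • u) :
    ALag r l del x y' u' - ALag r l del x y u ≤
      l y' - l y - ⟪g y', y' - y⟫ + (L ^ 2 / del - del / 2) * ‖y' - y‖ ^ 2 := by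
  rw [ALag_sub_ALag_of_dual_update hu', hy', real_inner_smul_left]
  linarith [mul_norm_sub_sq_le_of_lipschitz hdel hLip hy' hy]

end AugmentedLagrangian

theorem stmt15_general {N : ℕ} (L del : ℝ) (hL : 0 < L) (hdel : 0 < del)
    (r l : EuclideanSpace ℝ (Fin N) → ℝ)
    (g : EuclideanSpace ℝ (Fin N) → EuclideanSpace ℝ (Fin N))
    (hg : ∀ z, HasGradientAt l (g z) z)
    (hLip : ∀ z w, ‖g z - g w‖ ≤ L * ‖z - w‖)
    (x y u : ℕ → EuclideanSpace ℝ (Fin N))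
    (hyopt : ∀ k, g (y (k + 1)) + del • (y (k + 1) - x (k + 1) - u k) = 0)
    (huup : ∀ k, u (k + 1) = u k + x (k + 1) - y (k + 1)) :
    (∀ k, 1 ≤ k →
        ALag r l del (x (k + 1)) (y (k + 1)) (u (k + 1)) -
            ALag r l del (x (k + 1)) (y k) (u k) ≤
          (3 * L / 2 + L ^ 2 / del - del / 2) * ‖y (k + 1) - y k‖ ^ 2) ∧
      (ConvexOn ℝ Set.univ l →
        ∀ k, 1 ≤ k →
          ALag r l del (x (k + 1)) (y (k + 1)) (u (k + 1)) -
              ALag r l del (x (k + 1)) (y k) (u k) ≤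
            (L ^ 2 / del - del / 2) * ‖y (k + 1) - y k‖ ^ 2) := by
  have hdual : ∀ k, g (y (k + 1)) = del • u (k + 1) := fun k =>
    gradient_eq_smul_of_dual_update (hyopt k) (huup k)
  have hstep : ∀ k, 1 ≤ k →
      ALag r l del (x (k + 1)) (y (k + 1)) (u (k + 1)) - ALag r l del (x (k + 1)) (y k) (u k) ≤
        l (y (k + 1)) - l (y k) - ⟪g (y (k + 1)), y (k + 1) - y k⟫ +
          (L ^ 2 / del - del / 2) * ‖y (k + 1) - y k‖ ^ 2 := by
    rintro (_ | k) hk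
    · omega
    · exact ALag_sub_ALag_le hdel hLip (huup (k + 1)) (hdual (k + 1)) (hdual k)
  refine ⟨fun k hk => ?_, fun hconv k hk => ?_⟩
  · have hdesc := quadratic_lower_bound_of_lipschitz_gradient hg hLip (y (k + 1)) (y k)
    rw [← neg_sub (y (k + 1)) (y k), inner_neg_right, norm_neg] at hdesc
    linarith [hstep k hk, mul_nonneg hL.le (sq_nonneg ‖y (k + 1) - y k‖)]
  · have hconv := hconv.add_inner_sub_le (mem_univ (y (k + 1))) (mem_univ (y k)) (hg _)
    rw [← neg_sub (y (k + 1)) (y k), inner_neg_right] at hconv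
    linarith [hstep k hk]

theorem stmt15 {N : ℕ} (L del : ℝ) (hL : 0 < L) (hdel : 0 < del)
    (r l : EuclideanSpace ℝ (Fin N) → ℝ)
    (g : EuclideanSpace ℝ (Fin N) → EuclideanSpace ℝ (Fin N))
    (hg : ∀ z, HasGradientAt l (g z) z)
    (hLip : ∀ z w, ‖g z - g w‖ ≤ L * ‖z - w‖)
    (x y u : ℕ → EuclideanSpace ℝ (Fin N))
    (hxup : ∀ k, IsMinOn (fun z => r z + del / 2 * ‖z - y k + u k‖ ^ 2) Set.univ (x (k + 1)))
    (hyopt : ∀ k, g (y (k + 1)) + del • (y (k + 1) - x (k + 1) - u k) = 0)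
    (huup : ∀ k, u (k + 1) = u k + x (k + 1) - y (k + 1)) :
    (∀ k, 1 ≤ k →
        ALag r l del (x (k + 1)) (y (k + 1)) (u (k + 1)) -
            ALag r l del (x (k + 1)) (y k) (u k) ≤
          (3 * L / 2 + L ^ 2 / del - del / 2) * ‖y (k + 1) - y k‖ ^ 2) ∧
      (ConvexOn ℝ Set.univ l →
        ∀ k, 1 ≤ k →
          ALag r l del (x (k + 1)) (y (k + 1)) (u (k + 1)) -
              ALag r l del (x (k + 1)) (y k) (u k) ≤
            (L ^ 2 / del - del / 2) * ‖y (k + 1) - y k‖ ^ 2) :=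
  stmt15_general L del hL hdel r l g hg hLip x y u hyopt huup
end

section
/- For the ADMM scheme on min r(x) + l(y) s.t. x = y with r coercive + l having L-Lipschitz gradient: if δ > L, then L_δ(x^k, y^k, u^k) ≥ r(x^k) + l(x^k) + ((δ - L)/2)‖x^k - y^k‖₂² for all k, using δu^k = ∇l(y^k). In particular, if r(x) + l(x) is coercive and bounded below, the augmented Lagrangian values are bounded below along the iteration. -/
open Finset Filter Set
open scoped RealInnerProductSpace

/-! The descent lemma for a function with `L`-Lipschitz gradient gives
`l x ≤ l y + ⟪∇l y, x - y⟫ + L / 2 * ‖x - y‖ ^ 2`. Since `δ • u = ∇l y`, the multiplier term of the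
augmented Lagrangian is exactly `⟪∇l y, x - y⟫`, so `L_δ(x, y, u) - r x - l x` is at least
`(δ - L) / 2 * ‖x - y‖ ^ 2`, which is nonnegative when `δ > L`. -/

theorem image_le_add_fderiv_add_sq_of_lipschitz_fderiv {E : Type*} [NormedAddCommGroup E]
    [NormedSpace ℝ E] {f : E → ℝ} {f' : E → StrongDual ℝ E} {L : ℝ}
    (hf : ∀ z, HasFDerivAt f (f' z) z) (hf' : ∀ z w, ‖f' z - f' w‖ ≤ L * ‖z - w‖) (x y : E) :
    f x ≤ f y + f' y (x - y) + L / 2 * ‖x - y‖ ^ 2 := by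
  set v := x - y
  -- `φ t = f (y + t v) - (first-order model)` has derivative `≤ 0` for `t ≥ 0`, hence `φ 1 ≤ φ 0`.
  set φ : ℝ → ℝ := fun t ↦ f (y + t • v) - t * f' y v - L / 2 * t ^ 2 * ‖v‖ ^ 2
  have hφ : ∀ t, HasDerivAt φ (f' (y + t • v) v - f' y v - L * t * ‖v‖ ^ 2) t := by
    intro t
    have hcurve : HasDerivAt (fun t : ℝ ↦ y + t • v) v t := by
      simpa using ((hasDerivAt_id t).smul_const v).const_add y
    refine ((((hf _).comp_hasDerivAt t hcurve).sub ((hasDerivAt_id t).mul_const (f' y v))).sub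
      (((hasDerivAt_pow 2 t).const_mul (L / 2)).mul_const (‖v‖ ^ 2))).congr_deriv ?_
    simp only [Nat.cast_ofNat]
    ring
  have hφ'_nonpos : ∀ t ∈ interior (Ici (0 : ℝ)),
      f' (y + t • v) v - f' y v - L * t * ‖v‖ ^ 2 ≤ 0 := by
    intro t ht
    rw [interior_Ici, Set.mem_Ioi] at ht
    have := calc f' (y + t • v) v - f' y v = (f' (y + t • v) - f' y) v := rfl
      _ ≤ ‖f' (y + t • v) - f' y‖ * ‖v‖ :=
          (le_abs_self _).trans ((f' (y + t • v) - f' y).le_opNorm v)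
      _ ≤ L * ‖y + t • v - y‖ * ‖v‖ := by gcongr; exact hf' _ _
      _ = L * t * ‖v‖ ^ 2 := by
        rw [add_sub_cancel_left, norm_smul, Real.norm_of_nonneg ht.le]; ring
    linarith
  have hanti : AntitoneOn φ (Ici 0) :=
    antitoneOn_of_hasDerivWithinAt_nonpos (convex_Ici 0)
      (fun t _ ↦ (hφ t).continuousAt.continuousWithinAt)
      (fun t _ ↦ (hφ t).hasDerivWithinAt) hφ'_nonpos
  have := hanti (mem_Ici.2 le_rfl) (mem_Ici.2 zero_le_one) zero_le_one
  simp only [φ, one_smul, zero_smul, add_zero, v, add_sub_cancel] at this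
  linarith

theorem image_le_add_inner_add_sq_of_lipschitz_gradient {E : Type*} [NormedAddCommGroup E]
    [InnerProductSpace ℝ E] [CompleteSpace E] {f : E → ℝ} {g : E → E} {L : ℝ}
    (hf : ∀ z, HasGradientAt f (g z) z) (hg : ∀ z w, ‖g z - g w‖ ≤ L * ‖z - w‖) (x y : E) :
    f x ≤ f y + ⟪g y, x - y⟫ + L / 2 * ‖x - y‖ ^ 2 :=
  image_le_add_fderiv_add_sq_of_lipschitz_fderiv (fun z ↦ (hf z).hasFDerivAt)
    (fun z w ↦ by rw [← map_sub, LinearIsometryEquiv.norm_map]; exact hg z w) x y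

theorem add_add_mul_sq_le_ALag {N : ℕ} {r l : EuclideanSpace ℝ (Fin N) → ℝ}
    {g : EuclideanSpace ℝ (Fin N) → EuclideanSpace ℝ (Fin N)} {L del : ℝ}
    (hl : ∀ z, HasGradientAt l (g z) z) (hg : ∀ z w, ‖g z - g w‖ ≤ L * ‖z - w‖)
    {x y u : EuclideanSpace ℝ (Fin N)} (hu : del • u = g y) :
    r x + l x + (del - L) / 2 * ‖x - y‖ ^ 2 ≤ ALag r l del x y u := by
  have hdescent := image_le_add_inner_add_sq_of_lipschitz_gradient hl hg x y
  rw [← hu, real_inner_smul_left] at hdescent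
  unfold ALag
  linarith

theorem stmt16_general {N : ℕ} (L del : ℝ) (hdelL : L < del)
    (r l : EuclideanSpace ℝ (Fin N) → ℝ)
    (g : EuclideanSpace ℝ (Fin N) → EuclideanSpace ℝ (Fin N))
    (hg : ∀ z, HasGradientAt l (g z) z)
    (hLip : ∀ z w, ‖g z - g w‖ ≤ L * ‖z - w‖)
    (x y u : ℕ → EuclideanSpace ℝ (Fin N))
    (hgu : ∀ k, del • u k = g (y k)) :
    (∀ k, r (x k) + l (x k) + (del - L) / 2 * ‖x k - y k‖ ^ 2 ≤
        ALag r l del (x k) (y k) (u k)) ∧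
      ((∃ B : ℝ, ∀ z, B ≤ r z + l z) →
        ∃ B : ℝ, ∀ k, B ≤ ALag r l del (x k) (y k) (u k)) := by
  have hALag k := add_add_mul_sq_le_ALag (r := r) (x := x k) hg hLip (hgu k)
  refine ⟨hALag, fun ⟨B, hB⟩ ↦ ⟨B, fun k ↦ ?_⟩⟩
  have hgap : 0 ≤ (del - L) / 2 * ‖x k - y k‖ ^ 2 := by
    have := sub_pos.2 hdelL
    positivity
  linarith [hB (x k), hALag k]

theorem stmt16 {N : ℕ} (L del : ℝ) (hL : 0 < L) (hdelL : L < del)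
    (r l : EuclideanSpace ℝ (Fin N) → ℝ)
    (g : EuclideanSpace ℝ (Fin N) → EuclideanSpace ℝ (Fin N))
    (hg : ∀ z, HasGradientAt l (g z) z)
    (hLip : ∀ z w, ‖g z - g w‖ ≤ L * ‖z - w‖)
    (x y u : ℕ → EuclideanSpace ℝ (Fin N))
    (hgu : ∀ k, del • u k = g (y k)) :
    (∀ k, r (x k) + l (x k) + (del - L) / 2 * ‖x k - y k‖ ^ 2 ≤
        ALag r l del (x k) (y k) (u k)) ∧
      ((∃ B : ℝ, ∀ z, B ≤ r z + l z) →
        ∃ B : ℝ, ∀ k, B ≤ ALag r l del (x k) (y k) (u k)) :=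
  stmt16_general L del hdelL r l g hg hLip x y u hgu
end
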